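/- SU(3) is a subgroup of G₂: let ι : ℝ × ℂ³ → ℝ⁷ be the real-linear isomorphism sending (x₁, (x₂+ix₃, x₄+ix₅, x₆+ix₇)) to (x₁,…,x₇). For every U in the special unitary group SU(3) (a 3×3 complex matrix with U*U = 1 and det U = 1), the real-linear map A = ι ∘ (id_ℝ × U) ∘ ι⁻¹ : ℝ⁷ → ℝ⁷ satisfies A*φ₀ = φ₀. -/

import Mathlib

open scoped RealInnerProductSpace

noncomputable section

/-- ℝ⁷ with its standard Euclidean inner product. -/
abbrev E7 := EuclideanSpace ℝ (Fin 7)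

/-- The coordinate 3-form dx_i ∧ dx_j ∧ dx_k on ℝ⁷ (indices 0,…,6 for x₁,…,x₇). -/
def tri7 (i j k : Fin 7) (u v w : E7) : ℝ :=
  Matrix.det !![u i, u j, u k; v i, v j, v k; w i, w j, w k]

/-- The G₂ 3-form φ₀ = dx₁₂₃ + dx₁₄₅ + dx₁₆₇ + dx₂₄₆ − dx₂₅₇ − dx₃₄₇ − dx₃₅₆. -/
def phi0 (u v w : E7) : ℝ :=
  tri7 0 1 2 u v w + tri7 0 3 4 u v w + tri7 0 5 6 u v w + tri7 1 3 5 u v w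
    - tri7 1 4 6 u v w - tri7 2 3 6 u v w - tri7 2 4 5 u v w

/-- The real-linear isomorphism ι : ℝ × ℂ³ → ℝ⁷ sending
(x₁, (x₂+ix₃, x₄+ix₅, x₆+ix₇)) to (x₁,…,x₇). -/
def iota7 (p : ℝ × (Fin 3 → ℂ)) : E7 :=
  (WithLp.equiv 2 (Fin 7 → ℝ)).symm
    ![p.1, (p.2 0).re, (p.2 0).im, (p.2 1).re, (p.2 1).im, (p.2 2).re, (p.2 2).im]

/-- The inverse of ι, sending (x₁,…,x₇) to (x₁, (x₂+ix₃, x₄+ix₅, x₆+ix₇)). -/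
def iota7inv (v : E7) : ℝ × (Fin 3 → ℂ) :=
  (v 0, ![v 1 + v 2 * Complex.I, v 3 + v 4 * Complex.I, v 5 + v 6 * Complex.I])

/-- The real-linear map A = ι ∘ (id_ℝ × U) ∘ ι⁻¹ : ℝ⁷ → ℝ⁷ induced by a complex matrix U. -/
def Amap7 (U : Matrix (Fin 3) (Fin 3) ℂ) (v : E7) : E7 :=
  iota7 ((iota7inv v).1, U.mulVec (iota7inv v).2)


open Matrix

/-- Kähler form on ℂ³. -/
def omg (z w : Fin 3 → ℂ) : ℝ := ((star z) ⬝ᵥ w).im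

/-- Holomorphic volume form on ℂ³. -/
def Omg (z w t : Fin 3 → ℂ) : ℂ :=
  Matrix.det !![z 0, z 1, z 2; w 0, w 1, w 2; t 0, t 1, t 2]

lemma omg_inv (U : Matrix (Fin 3) (Fin 3) ℂ) (hU : star U * U = 1) (z w : Fin 3 → ℂ) :
    omg (U.mulVec z) (U.mulVec w) = omg z w := by
  unfold omg
  rw [Matrix.star_mulVec, Matrix.dotProduct_mulVec, Matrix.vecMul_vecMul]
  rw [show Uᴴ * U = 1 from hU, Matrix.vecMul_one]

lemma Omg_inv (U : Matrix (Fin 3) (Fin 3) ℂ) (z w t : Fin 3 → ℂ) :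
    Omg (U.mulVec z) (U.mulVec w) (U.mulVec t) = U.det * Omg z w t := by
  unfold Omg
  simp [Matrix.det_fin_three, Matrix.mulVec, dotProduct, Fin.sum_univ_three]
  ring

lemma cons_val_five' {α : Type*} (a b c d e f g : α) : ![a,b,c,d,e,f,g] 5 = f := rfl
lemma cons_val_six' {α : Type*} (a b c d e f g : α) : ![a,b,c,d,e,f,g] 6 = g := rfl

lemma iota7_iota7inv (v : E7) : iota7 (iota7inv v) = v := by
  ext i
  fin_cases i <;>
    simp [iota7, iota7inv, WithLp.equiv_symm_apply, WithLp.ofLp_toLp, cons_val_five', cons_val_six']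

lemma key (p q r : ℝ × (Fin 3 → ℂ)) :
    phi0 (iota7 p) (iota7 q) (iota7 r) =
      p.1 * omg q.2 r.2 - q.1 * omg p.2 r.2 + r.1 * omg p.2 q.2
        + (Omg p.2 q.2 r.2).re := by
  simp only [phi0, tri7, iota7, omg, Omg, Matrix.det_fin_three,
    dotProduct, Fin.sum_univ_three, Pi.star_apply, Complex.mul_im,
    Complex.mul_re, Complex.sub_re, Complex.sub_im, Complex.add_re, Complex.add_im,
    Complex.star_def, Complex.conj_re, Complex.conj_im, WithLp.equiv_symm_apply, WithLp.ofLp_toLp]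
  simp only [Matrix.of_apply, Matrix.cons_val', Matrix.cons_val_zero, Matrix.cons_val_one, Matrix.head_cons,
    Matrix.cons_val_fin_one, Matrix.empty_val', Matrix.head_fin_const, Matrix.cons_val_two,
    Matrix.tail_cons, Matrix.cons_val_three, Matrix.cons_val_four, cons_val_five', cons_val_six']
  norm_num [Fin.isValue, Matrix.cons_val_succ]
  ring

/-- SU(3) is a subgroup of G₂: for U ∈ SU(3), the induced real-linear map
A = ι ∘ (id_ℝ × U) ∘ ι⁻¹ of ℝ⁷ satisfies A*φ₀ = φ₀. -/
theorem su3_subset_g2 (U : Matrix.specialUnitaryGroup (Fin 3) ℂ) :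
    ∀ u v w : E7,
      phi0 (Amap7 (U : Matrix (Fin 3) (Fin 3) ℂ) u)
           (Amap7 (U : Matrix (Fin 3) (Fin 3) ℂ) v)
           (Amap7 (U : Matrix (Fin 3) (Fin 3) ℂ) w) = phi0 u v w := by
  obtain ⟨hUuni, hUdet⟩ := Matrix.mem_specialUnitaryGroup_iff.mp U.2
  have hstar : star (U : Matrix (Fin 3) (Fin 3) ℂ) * (U : Matrix (Fin 3) (Fin 3) ℂ) = 1 :=
    (Matrix.mem_unitaryGroup_iff'.mp hUuni)
  intro u v w
  conv_rhs => rw [← iota7_iota7inv u, ← iota7_iota7inv v, ← iota7_iota7inv w]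
  rw [show Amap7 (U : Matrix (Fin 3) (Fin 3) ℂ) u =
      iota7 ((iota7inv u).1, (U : Matrix (Fin 3) (Fin 3) ℂ).mulVec (iota7inv u).2) from rfl,
    show Amap7 (U : Matrix (Fin 3) (Fin 3) ℂ) v =
      iota7 ((iota7inv v).1, (U : Matrix (Fin 3) (Fin 3) ℂ).mulVec (iota7inv v).2) from rfl,
    show Amap7 (U : Matrix (Fin 3) (Fin 3) ℂ) w =
      iota7 ((iota7inv w).1, (U : Matrix (Fin 3) (Fin 3) ℂ).mulVec (iota7inv w).2) from rfl,
    key, key]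
  simp only [omg_inv _ hstar, Omg_inv, hUdet, one_mul]
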